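/- Let V be a finite-dimensional vector space over ℂ, B a symmetric bilinear form on V, and g : V ≃ V a linear automorphism preserving B, i.e. B(g x, g y) = B(x, y) for all x, y ∈ V. Let s : V ≃ V be a ℂ-linear equivalence such that s x = λ • x for every λ ∈ ℂ and every x in the generalized eigenspace of g with eigenvalue λ. Then B is invariant under the unipotent part u = s⁻¹ ∘ g of g: B(u x, u y) = B(x, y) for all x, y ∈ V. -/

import Mathlib

/-!
Generalized eigenspaces `E_λ`, `E_μ` of a `B`-preserving `g` are `B`-orthogonal unless
`λ μ = 1`: expanding `B x y = B (g x) (g y)` with `g = (g - λ) + λ` and `g = (g - μ) + μ` gives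
`(1 - λ μ) B x y` as a combination of pairings that vanish by induction on the nilpotency
orders. Hence for `x ∈ E_λ`, `y ∈ E_μ` we get `B (s x) (s y) = λ μ B x y = B x y` (both sides
vanish when `λ μ ≠ 1`), so `s` preserves `B` because the `E_λ` span `V`; then so does `s⁻¹ g`.
-/

open Module End

theorem LinearMap.ext₂_of_iSup_eq_top {R M N P ι κ : Type*} [CommSemiring R]
    [AddCommMonoid M] [AddCommMonoid N] [AddCommMonoid P] [Module R M] [Module R N] [Module R P]
    {p : ι → Submodule R M} {q : κ → Submodule R N} (hp : ⨆ i, p i = ⊤) (hq : ⨆ j, q j = ⊤)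
    {B B' : M →ₗ[R] N →ₗ[R] P} (h : ∀ i j, ∀ x ∈ p i, ∀ y ∈ q j, B x y = B' x y) :
    B = B' := by
  rw [Submodule.iSup_eq_span] at hp hq
  refine LinearMap.ext_on hp fun x hx ↦ LinearMap.ext_on hq fun y hy ↦ ?_
  obtain ⟨i, hx⟩ := Set.mem_iUnion.mp hx
  obtain ⟨j, hy⟩ := Set.mem_iUnion.mp hy
  exact h i j x hx y hy

section Orthogonality

variable {K V : Type*} [Field K] [AddCommGroup V] [Module K V]
  {B : V →ₗ[K] V →ₗ[K] K} {g : End K V}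

theorem one_sub_mul_mul_apply (hBg : ∀ x y, B (g x) (g y) = B x y)
    (lam mu : K) (x y : V) :
    (1 - lam * mu) * B x y =
      B ((g - lam • 1) x) ((g - mu • 1) y) + mu * B ((g - lam • 1) x) y +
        lam * B x ((g - mu • 1) y) := by
  simp only [LinearMap.sub_apply, LinearMap.smul_apply, Module.End.one_apply, map_sub, map_smul,
    smul_eq_mul]
  linear_combination -hBg x y

theorem apply_eq_zero_of_pow_sub_smul_apply_eq_zero (hBg : ∀ x y, B (g x) (g y) = B x y)
    {lam mu : K} (hlm : lam * mu ≠ 1) (k l : ℕ) {x y : V}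
    (hx : ((g - lam • 1) ^ k) x = 0) (hy : ((g - mu • 1) ^ l) y = 0) : B x y = 0 := by
  induction k generalizing x l y with
  | zero => simp_all
  | succ k ihk =>
    induction l generalizing y with
    | zero => simp_all
    | succ l ihl =>
      rw [pow_succ, Module.End.mul_apply] at hx hy
      have h := one_sub_mul_mul_apply hBg lam mu x y
      rw [ihk l hx hy, ihk (l + 1) hx (by rwa [pow_succ, Module.End.mul_apply]), ihl hy]
        at h
      simpa [sub_eq_zero, Ne.symm hlm] using h

theorem apply_eq_zero_of_mem_maxGenEigenspace (hBg : ∀ x y, B (g x) (g y) = B x y)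
    {lam mu : K} (hlm : lam * mu ≠ 1) {x y : V} (hx : x ∈ g.maxGenEigenspace lam)
    (hy : y ∈ g.maxGenEigenspace mu) : B x y = 0 := by
  obtain ⟨k, hk⟩ := (mem_maxGenEigenspace _ _ _).mp hx
  obtain ⟨l, hl⟩ := (mem_maxGenEigenspace _ _ _).mp hy
  exact apply_eq_zero_of_pow_sub_smul_apply_eq_zero hBg hlm k l hk hl

theorem apply_apply_eq_of_smul_on_maxGenEigenspace (hBg : ∀ x y, B (g x) (g y) = B x y)
    {s : End K V} (hs : ∀ lam, ∀ x ∈ g.maxGenEigenspace lam, s x = lam • x)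
    {lam mu : K} {x y : V} (hx : x ∈ g.maxGenEigenspace lam)
    (hy : y ∈ g.maxGenEigenspace mu) : B (s x) (s y) = B x y := by
  rw [hs lam x hx, hs mu y hy, map_smul, map_smul, LinearMap.smul_apply, smul_smul,
    smul_eq_mul]
  by_cases hlm : mu * lam = 1
  · rw [hlm, one_mul]
  · rw [apply_eq_zero_of_mem_maxGenEigenspace hBg (mul_comm lam mu ▸ hlm) hx hy, mul_zero]

theorem compl₁₂_eq_of_smul_on_maxGenEigenspace [IsAlgClosed K] [FiniteDimensional K V]
    (hBg : ∀ x y, B (g x) (g y) = B x y)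
    {s : End K V} (hs : ∀ lam, ∀ x ∈ g.maxGenEigenspace lam, s x = lam • x) :
    B.compl₁₂ s s = B :=
  LinearMap.ext₂_of_iSup_eq_top (iSup_maxGenEigenspace_eq_top g)
    (iSup_maxGenEigenspace_eq_top g) fun _ _ _ hx _ hy ↦
      apply_apply_eq_of_smul_on_maxGenEigenspace hBg hs hx hy

end Orthogonality

theorem bilin_invariant_under_unipotentPart_general
    (V : Type*) [AddCommGroup V] [Module ℂ V] [FiniteDimensional ℂ V]
    (B : V →ₗ[ℂ] V →ₗ[ℂ] ℂ)
    (g : V ≃ₗ[ℂ] V) (hBg : ∀ x y : V, B (g x) (g y) = B x y)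
    (s : V ≃ₗ[ℂ] V)
    (hs : ∀ (lam : ℂ) (x : V),
      x ∈ Module.End.maxGenEigenspace g.toLinearMap lam → s x = lam • x)
    (x y : V) : B (s.symm (g x)) (s.symm (g y)) = B x y := by
  have hBs := compl₁₂_eq_of_smul_on_maxGenEigenspace hBg (s := s.toLinearMap) hs
  have h := LinearMap.congr_fun₂ hBs (s.symm (g x)) (s.symm (g y))
  simp only [LinearMap.compl₁₂_apply, LinearEquiv.coe_coe, LinearEquiv.apply_symm_apply] at h
  rw [← h, hBg]

/-- If a linear automorphism `g` of a finite-dimensional complex vector space preserves a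
symmetric bilinear form `B`, then so does the unipotent part `u = s⁻¹ ∘ g` of `g`, where `s`
is the semisimple part of `g`, i.e. the linear equivalence acting as the scalar `λ` on each
generalized eigenspace of `g` with eigenvalue `λ`. -/
theorem bilin_invariant_under_unipotentPart
    (V : Type*) [AddCommGroup V] [Module ℂ V] [FiniteDimensional ℂ V]
    (B : V →ₗ[ℂ] V →ₗ[ℂ] ℂ) (hBsymm : ∀ x y : V, B x y = B y x)
    (g : V ≃ₗ[ℂ] V) (hBg : ∀ x y : V, B (g x) (g y) = B x y)
    (s : V ≃ₗ[ℂ] V)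
    (hs : ∀ (lam : ℂ) (x : V),
      x ∈ Module.End.maxGenEigenspace g.toLinearMap lam → s x = lam • x)
    (x y : V) : B (s.symm (g x)) (s.symm (g y)) = B x y :=
  bilin_invariant_under_unipotentPart_general V B g hBg s hs x y
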